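/- Fix r_comm, r_comp, f_max, Δf with 0 < Δf < f_max. The compensating bandwidth ΔB(B_max) = B_max / ((r_comp/r_comm)(f_max²/(Δf B_max) − f_max/B_max) − 1), viewed on the range of B_max where the denominator is positive, is strictly increasing in B_max. -/

import Mathlib

/-!
The denominator is `C / B - 1` with `C = (r_comp / r_comm) (f_max² / Δf - f_max)`, so on the
given range `ΔB = B² / (C - B)` with `0 < B < C`: an increasing numerator over a decreasing
positive denominator.
-/

open Set

lemma strictMonoOn_sq_div_sub (C : ℝ) : StrictMonoOn (fun B : ℝ => B ^ 2 / (C - B)) (Ico 0 C) := by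
  intro a ⟨ha, haC⟩ b ⟨_, hbC⟩ hab
  have hCb : 0 < C - b := sub_pos.mpr hbC
  calc a ^ 2 / (C - a) < b ^ 2 / (C - a) := by gcongr
    _ ≤ b ^ 2 / (C - b) := by gcongr

lemma div_div_sub_one_eq_sq_div_sub {B : ℝ} (hB : B ≠ 0) (C : ℝ) :
    B / (C / B - 1) = B ^ 2 / (C - B) := by
  rw [div_sub_one hB, div_div_eq_mul_div, sq]

lemma mem_Ioo_of_div_sub_one_pos {B C : ℝ} (hB : 0 < B) (h : 0 < C / B - 1) : B ∈ Ioo 0 C :=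
  ⟨hB, by rwa [sub_pos, one_lt_div hB] at h⟩

lemma strictMonoOn_div_div_sub_one (C : ℝ) :
    StrictMonoOn (fun B : ℝ => B / (C / B - 1)) {B : ℝ | 0 < B ∧ 0 < C / B - 1} := by
  have hsub : {B : ℝ | 0 < B ∧ 0 < C / B - 1} ⊆ Ico 0 C := fun B ⟨hB, h⟩ =>
    Ioo_subset_Ico_self (mem_Ioo_of_div_sub_one_pos hB h)
  refine ((strictMonoOn_sq_div_sub C).mono hsub).congr fun B ⟨hB, _⟩ => ?_
  exact (div_div_sub_one_eq_sq_div_sub hB.ne' C).symm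

theorem compensating_bandwidth_strict_mono_general
    (rcomm rcomp fmax Δf : ℝ) :
    StrictMonoOn
      (fun B : ℝ => B /
        ((rcomp / rcomm) * (fmax ^ 2 / (Δf * B) - fmax / B) - 1))
      {B : ℝ | 0 < B ∧
        0 < (rcomp / rcomm) * (fmax ^ 2 / (Δf * B) - fmax / B) - 1} := by
  have hden : ∀ B : ℝ, (rcomp / rcomm) * (fmax ^ 2 / (Δf * B) - fmax / B) =
      (rcomp / rcomm) * (fmax ^ 2 / Δf - fmax) / B := fun B => by ring
  simp only [hden]
  exact strictMonoOn_div_div_sub_one _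

theorem compensating_bandwidth_strict_mono
    (rcomm rcomp fmax Δf : ℝ)
    (hc : 0 < rcomm) (hp : 0 < rcomp) (hf : 0 < fmax)
    (hΔf : 0 < Δf) (hΔf' : Δf < fmax) :
    StrictMonoOn
      (fun B : ℝ => B /
        ((rcomp / rcomm) * (fmax ^ 2 / (Δf * B) - fmax / B) - 1))
      {B : ℝ | 0 < B ∧
        0 < (rcomp / rcomm) * (fmax ^ 2 / (Δf * B) - fmax / B) - 1} :=
  compensating_bandwidth_strict_mono_general rcomm rcomp fmax Δf
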